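/- arXiv:1605.05610 — 2 statements merged into one kernel-verified Lean document; each statement's English description precedes it below -/
import Mathlib

section
/- Let σ₁ ≥ σ₂ ≥ … ≥ σ_n ≥ 0 be real numbers, let 1 ≤ k < n, and let t be a natural number. Let S₁ be the k×k diagonal matrix with diagonal entries σ₁,…,σ_k and let S₂ be the (n−k)×(n−k) diagonal matrix with diagonal entries σ_{k+1},…,σ_n. Let G₁ be an invertible real k×k matrix and G₂ a real (n−k)×k matrix. Suppose y₁ ∈ ℝᵏ and y₂ ∈ ℝ^{n−k} satisfy ‖y₁‖² + ‖y₂‖² ≤ 1 and y₁ᵀ·S₁^{2t+1}·G₁ + y₂ᵀ·S₂^{2t+1}·G₂ = 0. Then for every i with 1 ≤ i ≤ k and σ_i > 0, one has |y₁(i)| ≤ (σ_{k+1}/σ_i)^{2t+1} · ‖G₂‖ · ‖G₁⁻¹‖. -/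
/-!
Multiplying the orthogonality relation on the right by `G₁⁻¹` gives
`y₁ᵀ S₁^(2t+1) = -y₂ᵀ S₂^(2t+1) G₂ G₁⁻¹`. The `i`-th coordinate of the left side is
`σ_i^(2t+1) y₁(i)`, while every coordinate of the right side is bounded by
`‖y₂‖ ‖S₂^(2t+1)‖ ‖G₂‖ ‖G₁⁻¹‖ ≤ σ_{k+1}^(2t+1) ‖G₂‖ ‖G₁⁻¹‖`, since `‖y₂‖ ≤ 1` and the
largest diagonal entry of `S₂` is `σ_{k+1}`.
-/

open Matrix

/-- The spectral norm (ℓ₂→ℓ₂ operator norm) of a real matrix. -/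
noncomputable def specNorm {n m : ℕ} (M : Matrix (Fin n) (Fin m) ℝ) : ℝ :=
  ‖LinearMap.toContinuousLinearMap (Matrix.toEuclideanLin M)‖

/-- The Euclidean norm of a vector in `Fin n → ℝ`. -/
noncomputable def eNorm {n : ℕ} (v : Fin n → ℝ) : ℝ :=
  ‖(WithLp.equiv 2 (Fin n → ℝ)).symm v‖

open scoped Matrix.Norms.L2Operator

section Norms

variable {n m l : ℕ}

lemma specNorm_eq (M : Matrix (Fin n) (Fin m) ℝ) : specNorm M = ‖M‖ := rfl

lemma specNorm_nonneg (M : Matrix (Fin n) (Fin m) ℝ) : 0 ≤ specNorm M := norm_nonneg _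

lemma specNorm_transpose (M : Matrix (Fin n) (Fin m) ℝ) : specNorm Mᵀ = specNorm M := by
  rw [specNorm_eq, specNorm_eq, ← conjTranspose_eq_transpose_of_trivial,
    l2_opNorm_conjTranspose]

lemma specNorm_mul_le (A : Matrix (Fin n) (Fin m) ℝ) (B : Matrix (Fin m) (Fin l) ℝ) :
    specNorm (A * B) ≤ specNorm A * specNorm B :=
  l2_opNorm_mul A B

lemma specNorm_diagonal_le {d : Fin n → ℝ} {c : ℝ} (hc : 0 ≤ c) (hd : ∀ i, |d i| ≤ c) :
    specNorm (diagonal d) ≤ c := by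
  rw [specNorm_eq, l2_opNorm_diagonal]
  exact pi_norm_le_iff_of_nonneg hc |>.2 hd

lemma eNorm_nonneg (v : Fin n → ℝ) : 0 ≤ eNorm v := norm_nonneg _

lemma abs_apply_le_eNorm (v : Fin n → ℝ) (i : Fin n) : |v i| ≤ eNorm v :=
  PiLp.norm_apply_le ((WithLp.equiv 2 (Fin n → ℝ)).symm v) i

lemma eNorm_vecMul_le (x : Fin n → ℝ) (M : Matrix (Fin n) (Fin m) ℝ) :
    eNorm (x ᵥ* M) ≤ eNorm x * specNorm M := by
  rw [← mulVec_transpose, mul_comm, ← specNorm_transpose]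
  exact Mᵀ.l2_opNorm_mulVec _

lemma abs_vecMul_apply_le (x : Fin n → ℝ) (M : Matrix (Fin n) (Fin m) ℝ) (i : Fin m) :
    |(x ᵥ* M) i| ≤ eNorm x * specNorm M :=
  (abs_apply_le_eNorm _ i).trans (eNorm_vecMul_le x M)

end Norms

lemma vecMul_eq_neg_of_vecMul_mul_add_vecMul_eq_zero {R ι κ μ : Type*} [CommRing R]
    [Fintype ι] [Fintype κ] [DecidableEq κ] [Fintype μ]
    {x : ι → R} {y : μ → R} {A : Matrix ι κ R} {B : Matrix μ κ R} {G : Matrix κ κ R}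
    (hG : IsUnit G.det) (h : x ᵥ* (A * G) + y ᵥ* B = 0) :
    x ᵥ* A = -(y ᵥ* (B * G⁻¹)) := by
  rw [← vecMul_vecMul, ← neg_vecMul, ← eq_neg_of_add_eq_zero_left h, vecMul_vecMul,
    mul_nonsing_inv_cancel_right _ _ hG]

/-- the coordinate bound for the top block of a unit vector
orthogonal to the iterated subspace. -/
theorem stmt_5 {n k : ℕ} (hkn : k < n)
    (σ : Fin n → ℝ) (hσmono : Antitone σ) (hσpos : ∀ i, 0 ≤ σ i)
    (t : ℕ)
    (S₁ : Matrix (Fin k) (Fin k) ℝ)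
    (hS₁ : S₁ = Matrix.diagonal (fun i : Fin k => σ ⟨i.1, by omega⟩))
    (S₂ : Matrix (Fin (n - k)) (Fin (n - k)) ℝ)
    (hS₂ : S₂ = Matrix.diagonal (fun i : Fin (n - k) => σ ⟨k + i.1, by omega⟩))
    (G₁ : Matrix (Fin k) (Fin k) ℝ) (hG₁ : IsUnit G₁.det)
    (G₂ : Matrix (Fin (n - k)) (Fin k) ℝ)
    (y₁ : Fin k → ℝ) (y₂ : Fin (n - k) → ℝ)
    (hy : eNorm y₁ ^ 2 + eNorm y₂ ^ 2 ≤ 1)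
    (horth : Matrix.vecMul y₁ (S₁ ^ (2 * t + 1) * G₁) +
      Matrix.vecMul y₂ (S₂ ^ (2 * t + 1) * G₂) = 0) :
    ∀ i : Fin k, 0 < σ ⟨i.1, by omega⟩ →
      |y₁ i| ≤ (σ ⟨k, hkn⟩ / σ ⟨i.1, by omega⟩) ^ (2 * t + 1) *
        specNorm G₂ * specNorm G₁⁻¹ := by
  intro i hσi
  set p := 2 * t + 1
  have hy₂ : eNorm y₂ ≤ 1 :=
    (sq_le_one_iff₀ (eNorm_nonneg y₂)).1 (by linarith [sq_nonneg (eNorm y₁)])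
  have hS₂p : specNorm (S₂ ^ p) ≤ σ ⟨k, hkn⟩ ^ p := by
    rw [hS₂, diagonal_pow]
    refine specNorm_diagonal_le (pow_nonneg (hσpos _) p) fun j => ?_
    rw [Pi.pow_apply, abs_pow, abs_of_nonneg (hσpos _)]
    exact pow_le_pow_left₀ (hσpos _) (hσmono (Fin.mk_le_mk.2 (by omega))) p
  have hcoord : σ ⟨i.1, by omega⟩ ^ p * y₁ i = -(y₂ ᵥ* (S₂ ^ p * G₂ * G₁⁻¹)) i := by
    have := congrFun (vecMul_eq_neg_of_vecMul_mul_add_vecMul_eq_zero hG₁ horth) i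
    rwa [hS₁, diagonal_pow, vecMul_diagonal, mul_comm] at this
  have hbound : σ ⟨i.1, by omega⟩ ^ p * |y₁ i| ≤
      σ ⟨k, hkn⟩ ^ p * specNorm G₂ * specNorm G₁⁻¹ :=
    calc σ ⟨i.1, by omega⟩ ^ p * |y₁ i| = |(y₂ ᵥ* (S₂ ^ p * G₂ * G₁⁻¹)) i| := by
          rw [← abs_of_pos (pow_pos hσi p), ← abs_mul, hcoord, abs_neg]
      _ ≤ eNorm y₂ * specNorm (S₂ ^ p * G₂ * G₁⁻¹) := abs_vecMul_apply_le _ _ i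
      _ ≤ 1 * (specNorm (S₂ ^ p) * specNorm G₂ * specNorm G₁⁻¹) := by
          refine mul_le_mul hy₂ ((specNorm_mul_le _ _).trans ?_) (specNorm_nonneg _) zero_le_one
          exact mul_le_mul_of_nonneg_right (specNorm_mul_le _ _) (specNorm_nonneg _)
      _ ≤ σ ⟨k, hkn⟩ ^ p * specNorm G₂ * specNorm G₁⁻¹ := by
          rw [one_mul]
          exact mul_le_mul_of_nonneg_right
            (mul_le_mul_of_nonneg_right hS₂p (specNorm_nonneg _)) (specNorm_nonneg _)
  rw [div_pow, mul_assoc, div_mul_eq_mul_div, le_div_iff₀ (pow_pos hσi p), ← mul_assoc]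
  linarith
end

section
/- Let σ₁ ≥ σ₂ ≥ … ≥ σ_n ≥ 0 be real numbers, let 1 ≤ k < n, let ε > 0, let t be a natural number, and let M ≥ 0. Let 1 ≤ k' ≤ k be such that σ_{k'} ≥ (1+ε)·σ_{k+1} and σ_{k'+1} < (1+ε)·σ_{k+1}. Let y ∈ ℝⁿ be a unit vector such that |y(i)| ≤ (σ_{k+1}/σ_i)^{2t+1}·M for every 1 ≤ i ≤ k'. Then ∑_{i=1}^{n} y(i)²·σ_i² ≤ (M²·k·(1+ε)^{−4t} + (1+ε)²)·σ_{k+1}². -/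
/-!
On the first `k'` coordinates `σᵢ ≥ (1+ε)σ_{k+1}`, so the hypothesis on `y(i)` gives
`y(i)²σᵢ² ≤ M² (σ_{k+1}/σᵢ)^{4t} σ_{k+1}² ≤ M² (1+ε)^{-4t} σ_{k+1}²`, and there are at most `k`
such coordinates. On the remaining ones `σᵢ < (1+ε)σ_{k+1}`, and their weights `y(i)²` sum to at
most `‖y‖² = 1`.
-/

open Matrix

open Finset

lemma sum_sq_eq_one_of_eNorm_eq_one {n : ℕ} {y : Fin n → ℝ} (hy : eNorm y = 1) :
    ∑ i, y i ^ 2 = 1 := by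
  rw [eNorm, EuclideanSpace.norm_eq, Real.sqrt_eq_one] at hy
  simpa [Real.norm_eq_abs, sq_abs] using hy

lemma sq_mul_sq_le_of_abs_le_ratio_pow {c s σ y M : ℝ} (t : ℕ) (hc : 0 < c) (hs : 0 ≤ s)
    (hσ : c * s ≤ σ) (hy : |y| ≤ (s / σ) ^ (2 * t + 1) * M) :
    y ^ 2 * σ ^ 2 ≤ M ^ 2 * (c ^ (4 * t))⁻¹ * s ^ 2 := by
  rcases (hσ.trans' (by positivity : 0 ≤ c * s)).eq_or_lt with hσ0 | hσ0
  · rw [← hσ0, div_zero, zero_pow (by omega), zero_mul, abs_nonpos_iff] at hy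
    rw [hy, zero_pow two_ne_zero, zero_mul]
    positivity
  have hq : s / σ ≤ c⁻¹ := by
    rw [div_le_iff₀ hσ0, ← div_eq_inv_mul, le_div_iff₀ hc, mul_comm]
    exact hσ
  calc y ^ 2 * σ ^ 2 ≤ ((s / σ) ^ (2 * t + 1) * M) ^ 2 * σ ^ 2 :=
        mul_le_mul_of_nonneg_right (sq_le_sq' (neg_le_of_abs_le hy) (le_of_abs_le hy))
          (sq_nonneg σ)
    _ = M ^ 2 * (s / σ) ^ (4 * t) * (s / σ * σ) ^ 2 := by ring
    _ = M ^ 2 * (s / σ) ^ (4 * t) * s ^ 2 := by rw [div_mul_cancel₀ s hσ0.ne']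
    _ ≤ M ^ 2 * (c ^ (4 * t))⁻¹ * s ^ 2 := by
        rw [← inv_pow]
        gcongr

lemma sum_le_of_card_mul_add {ι : Type*} [Fintype ι] (p : ι → Prop) [DecidablePred p]
    {a w : ι → ℝ} {A B : ℝ} {k : ℕ} (hcard : #{i | p i} ≤ k) (hA : 0 ≤ A) (hB : 0 ≤ B)
    (hw : ∀ i, 0 ≤ w i) (hwsum : ∑ i, w i ≤ 1)
    (hhead : ∀ i, p i → a i ≤ A) (htail : ∀ i, ¬ p i → a i ≤ w i * B) :
    ∑ i, a i ≤ k * A + B := by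
  rw [← sum_filter_add_sum_filter_not univ p]
  gcongr
  · calc ∑ i ∈ univ.filter p, a i ≤ #{i | p i} • A :=
          sum_le_card_nsmul _ _ _ fun i hi => hhead i (mem_filter.mp hi).2
      _ ≤ k * A := by
          rw [nsmul_eq_mul]
          gcongr
  · calc ∑ i ∈ univ.filter (fun i => ¬ p i), a i ≤ ∑ i ∈ univ.filter (fun i => ¬ p i), w i * B :=
          sum_le_sum fun i hi => htail i (mem_filter.mp hi).2
      _ ≤ (∑ i, w i) * B := by
          rw [← sum_mul]
          exact mul_le_mul_of_nonneg_right
            (sum_le_sum_of_subset_of_nonneg (filter_subset _ univ) fun i _ _ => hw i) hB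
      _ ≤ B := mul_le_of_le_one_left hB hwsum

/-- the final bound on `∑ y(i)² σ(i)²`. -/
theorem stmt_6 {n k : ℕ} (hkn : k < n)
    (σ : Fin n → ℝ) (hσmono : Antitone σ) (hσpos : ∀ i, 0 ≤ σ i)
    (ε : ℝ) (hε : 0 < ε) (t : ℕ) (M : ℝ)
    (k' : ℕ) (hk'k : k' ≤ k)
    (hbig : σ ⟨k' - 1, by omega⟩ ≥ (1 + ε) * σ ⟨k, hkn⟩)
    (hsmall : σ ⟨k', by omega⟩ < (1 + ε) * σ ⟨k, hkn⟩)
    (y : Fin n → ℝ) (hy : eNorm y = 1)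
    (hybound : ∀ i : Fin n, (i : ℕ) < k' →
      |y i| ≤ (σ ⟨k, hkn⟩ / σ i) ^ (2 * t + 1) * M) :
    ∑ i : Fin n, y i ^ 2 * σ i ^ 2 ≤
      (M ^ 2 * k * ((1 + ε) ^ (4 * t))⁻¹ + (1 + ε) ^ 2) * σ ⟨k, hkn⟩ ^ 2 := by
  set s := σ ⟨k, hkn⟩
  have hs : 0 ≤ s := hσpos _
  have hcard : #{i : Fin n | (i : ℕ) < k'} ≤ k := by
    rw [Fin.card_filter_val_lt]
    omega
  have key := sum_le_of_card_mul_add (fun i : Fin n => (i : ℕ) < k') hcard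
    (A := M ^ 2 * ((1 + ε) ^ (4 * t))⁻¹ * s ^ 2) (B := (1 + ε) ^ 2 * s ^ 2) (w := fun i => y i ^ 2)
    (by positivity) (by positivity) (fun i => sq_nonneg _)
    (sum_sq_eq_one_of_eNorm_eq_one hy).le
    (fun i hi => sq_mul_sq_le_of_abs_le_ratio_pow t (by linarith) hs
      (hbig.trans (hσmono (Fin.mk_le_mk.mpr (by omega)))) (hybound i hi))
    (fun i hi => by
      have hσi : σ i < (1 + ε) * s := (hσmono (Fin.mk_le_mk.mpr (by omega))).trans_lt hsmall
      have hσi_sq : σ i ^ 2 ≤ (1 + ε) ^ 2 * s ^ 2 := by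
        rw [← mul_pow]
        exact pow_le_pow_left₀ (hσpos i) hσi.le 2
      exact mul_le_mul_of_nonneg_left hσi_sq (sq_nonneg _))
  linarith
end
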